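/- arXiv:1004.4146 — 4 statements merged into one kernel-verified Lean document; each statement's English description precedes it below -/
import Mathlib

section
/- Let P be a polytope in ℝ^d = S ⊕ T (orthogonal decomposition with dim S = d_s), and let P_s be the orthogonal projection of P onto S. If (g_s ⊕ 0, g_0) defines a facet of P (i.e., it is valid for P and there exist d affinely independent points of P saturating it), then (g_s, g_0) defines a facet of P_s, i.e., it is valid for P_s and there exist d_s affinely independent points of P_s saturating it. -/
/-!
Since `g_s ∈ S`, the functional `⟪g_s, ·⟫` is invariant under the orthogonal projection `π` onto
`S`, so validity passes to `P_s` and the projections of the `d` saturating points of the facet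
still saturate the inequality. Their direction space `W` has dimension `d - 1` and `π` kills
only `Sᗮ`, of dimension `d - d_s`, so by rank–nullity `π W` has dimension at least `d_s - 1`;
an affinely independent subfamily spanning the projected points then has at least `d_s` members.
-/

open Module RealInnerProductSpace

theorem Submodule.finrank_le_finrank_map_add_finrank_ker {K V V₂ : Type*} [DivisionRing K]
    [AddCommGroup V] [Module K V] [AddCommGroup V₂] [Module K V₂] [FiniteDimensional K V]
    (f : V →ₗ[K] V₂) (W : Submodule K V) :
    finrank K W ≤ finrank K (W.map f) + finrank K (LinearMap.ker f) := by
  have hker : finrank K (LinearMap.ker (f.domRestrict W)) ≤ finrank K (LinearMap.ker f) := by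
    rw [← Submodule.finrank_map_subtype_eq]
    refine Submodule.finrank_mono ?_
    rintro _ ⟨w, hw, rfl⟩
    exact hw
  have := (f.domRestrict W).finrank_range_add_finrank_ker
  rw [LinearMap.range_domRestrict] at this
  omega

theorem Set.Finite.exists_affineIndependent_fin_subset {k V P : Type*} [DivisionRing k]
    [AddCommGroup V] [Module k V] [AddTorsor V P] {s : Set P} (hs : s.Finite)
    (hne : s.Nonempty) {n : ℕ} (hn : n ≤ finrank k (vectorSpan k s) + 1) :
    ∃ y : Fin n → P, (∀ i, y i ∈ s) ∧ AffineIndependent k y := by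
  obtain ⟨t, hts, hspan, hind⟩ := exists_affineIndependent k V s
  have : Fintype t := (hs.subset hts).fintype
  have : Nonempty t :=
    ((affineSpan_nonempty k).1 (hspan ▸ (affineSpan_nonempty k).2 hne)).to_subtype
  have hcard : finrank k (vectorSpan k s) + 1 = Fintype.card t := by
    rw [← direction_affineSpan, ← hspan, direction_affineSpan, ← hind.finrank_vectorSpan_add_one,
      Subtype.range_coe]
  obtain ⟨e⟩ : Nonempty (Fin n ↪ t) :=
    Function.Embedding.nonempty_of_card_le (by rwa [Fintype.card_fin, ← hcard])
  exact ⟨fun i => e i, fun i => hts (e i).2, hind.comp_embedding e⟩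

theorem AffineIndependent.exists_affineIndependent_fin_comp_of_add_finrank_ker_le
    {k V₁ V₂ P₁ P₂ ι : Type*} [DivisionRing k] [AddCommGroup V₁] [Module k V₁] [AddTorsor V₁ P₁]
    [AddCommGroup V₂] [Module k V₂] [AddTorsor V₂ P₂] [FiniteDimensional k V₁] [Fintype ι]
    {x : ι → P₁} (hx : AffineIndependent k x) (f : P₁ →ᵃ[k] P₂) {n : ℕ}
    (hn : n + finrank k (LinearMap.ker f.linear) ≤ Fintype.card ι) :
    ∃ y : Fin n → P₂, (∀ i, ∃ j, f (x j) = y i) ∧ AffineIndependent k y := by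
  cases isEmpty_or_nonempty ι
  · have : Fintype.card ι = 0 := Fintype.card_eq_zero
    obtain rfl : n = 0 := by omega
    exact ⟨finZeroElim, finZeroElim, affineIndependent_of_subsingleton k _⟩
  have hrank :=
    Submodule.finrank_le_finrank_map_add_finrank_ker f.linear (vectorSpan k (Set.range x))
  rw [f.map_vectorSpan, ← Set.range_comp] at hrank
  rw [← hx.finrank_vectorSpan_add_one] at hn
  exact (Set.finite_range (f ∘ x)).exists_affineIndependent_fin_subset (Set.range_nonempty _)
    (by omega)

theorem Submodule.inner_starProjection_right_of_mem {𝕜 E : Type*} [RCLike 𝕜]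
    [NormedAddCommGroup E] [InnerProductSpace 𝕜 E] (K : Submodule 𝕜 E) [K.HasOrthogonalProjection]
    {g : E} (hg : g ∈ K) (p : E) : inner 𝕜 g (K.starProjection p) = inner 𝕜 g p := by
  rw [← inner_starProjection_left_eq_right, starProjection_eq_self_iff.2 hg]

theorem stmt2_general (d : ℕ) (S : Submodule ℝ (EuclideanSpace ℝ (Fin d)))
    (P : Set (EuclideanSpace ℝ (Fin d)))
    (Ps : Set (EuclideanSpace ℝ (Fin d)))
    (hPs : Ps = (fun p => (S.orthogonalProjection p : EuclideanSpace ℝ (Fin d))) '' P)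
    (gs : EuclideanSpace ℝ (Fin d)) (hgs : gs ∈ S) (g0 : ℝ)
    (hvalid : ∀ p ∈ P, ⟪gs, p⟫ ≤ g0)
    (x : Fin d → EuclideanSpace ℝ (Fin d))
    (hx : ∀ i, x i ∈ P ∧ ⟪gs, x i⟫ = g0) (hxi : AffineIndependent ℝ x) :
    (∀ q ∈ Ps, ⟪gs, q⟫ ≤ g0) ∧
      ∃ y : Fin (Module.finrank ℝ S) → EuclideanSpace ℝ (Fin d),
        (∀ i, y i ∈ Ps ∧ ⟪gs, y i⟫ = g0) ∧ AffineIndependent ℝ y := by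
  have hproj : ∀ p, ⟪gs, S.starProjection p⟫ = ⟪gs, p⟫ :=
    S.inner_starProjection_right_of_mem hgs
  refine ⟨?_, ?_⟩
  · rw [hPs]
    rintro _ ⟨p, hp, rfl⟩
    exact (hproj p).trans_le (hvalid p hp)
  · let π := S.starProjection.toLinearMap.toAffineMap
    have hker : LinearMap.ker π.linear = Sᗮ := by
      ext v
      simp [π]
    have hdim : finrank ℝ S + finrank ℝ (LinearMap.ker π.linear) = Fintype.card (Fin d) := by
      rw [hker, S.finrank_add_finrank_orthogonal, finrank_euclideanSpace_fin, Fintype.card_fin]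
    obtain ⟨y, hy, hyi⟩ := hxi.exists_affineIndependent_fin_comp_of_add_finrank_ker_le π hdim.le
    refine ⟨y, fun i => ?_, hyi⟩
    obtain ⟨j, hj⟩ := hy i
    rw [← hj]
    exact ⟨hPs ▸ ⟨x j, (hx j).1, rfl⟩, (hproj (x j)).trans (hx j).2⟩

/-- If the symmetric inequality `(g_s ⊕ 0, g_0)` (i.e. `g_s ∈ S`) defines a
facet of the full-dimensional polytope `P ⊆ ℝ^d` — it is valid and saturated by `d`
affinely independent points of `P` — then `(g_s, g_0)` defines a facet of the projected
polytope `P_s`: it is valid for `P_s` and saturated by `d_s = dim S` affinely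
independent points of `P_s`. -/
theorem stmt2 (d : ℕ) (S : Submodule ℝ (EuclideanSpace ℝ (Fin d)))
    (V P : Set (EuclideanSpace ℝ (Fin d))) (hV : V.Finite) (hP : P = convexHull ℝ V)
    (hfull : affineSpan ℝ P = ⊤)
    (Ps : Set (EuclideanSpace ℝ (Fin d)))
    (hPs : Ps = (fun p => (S.orthogonalProjection p : EuclideanSpace ℝ (Fin d))) '' P)
    (gs : EuclideanSpace ℝ (Fin d)) (hgs : gs ∈ S) (g0 : ℝ)
    (hvalid : ∀ p ∈ P, ⟪gs, p⟫ ≤ g0)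
    (x : Fin d → EuclideanSpace ℝ (Fin d))
    (hx : ∀ i, x i ∈ P ∧ ⟪gs, x i⟫ = g0) (hxi : AffineIndependent ℝ x) :
    (∀ q ∈ Ps, ⟪gs, q⟫ ≤ g0) ∧
      ∃ y : Fin (Module.finrank ℝ S) → EuclideanSpace ℝ (Fin d),
        (∀ i, y i ∈ Ps ∧ ⟪gs, y i⟫ = g0) ∧ AffineIndependent ℝ y :=
  stmt2_general d S P Ps hPs gs hgs g0 hvalid x hx hxi
end

section
/- The dimension of the space of no-signalling, normalized joint conditional probability distributions for n parties, each with m measurement settings and k outcomes, is (m(k-1)+1)^n - 1. -/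
/-!
Fix an outcome `o₀`. For a no-signalling `q`, the probability that a set `J` of parties, using
settings `s_J`, obtains outcomes `a_J` (all different from `o₀`) is well defined; these are the
Collins–Gisin coordinates of `q`, indexed by `ι → Option (S × {o // o ≠ o₀})`, a set of size
`(|S| (|O| - 1) + 1) ^ |ι|`. Inclusion–exclusion (`δ_{o₀} = 1 - ∑_{a ≠ o₀} δ_a` for each party)
reconstructs `q` from them, and every family of coordinates comes from a unique no-signalling `q`.
Normalisation fixes the coordinate with `J = ∅`, and the uniform distribution lies in the relative
interior of the polytope, so its affine hull has dimension one less.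
-/

open Finset Function

section Pi

variable {ι X : Type*} [Fintype ι] [DecidableEq ι] [Fintype X]

theorem sum_pi_prod_mul_prod (f g : ι → X → ℝ) :
    ∑ x : ι → X, (∏ i, f i (x i)) * ∏ i, g i (x i) = ∏ i, ∑ y, f i y * g i y := by
  simp_rw [← prod_mul_distrib]
  exact (Fintype.prod_sum fun i y => f i y * g i y).symm

theorem sum_prod_update (g : ι → X → ℝ) (r : ι → X) (i : ι) :
    ∑ b, ∏ j, g j (update r i b j) = (∑ b, g i b) * ∏ j ∈ univ.erase i, g j (r j) := by
  simp_rw [apply_update g, prod_update_of_mem (mem_univ i), sum_mul, sdiff_singleton_eq_erase]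

theorem sum_mul_eq_of_sum_update_eq [Nonempty X] {q q' : (ι → X) → ℝ} {i : ι}
    (hqq' : ∀ r, ∑ b, q (update r i b) = ∑ b, q' (update r i b))
    {g : (ι → X) → ℝ} (hg : ∀ r b, g (update r i b) = g r) :
    ∑ r, g r * q r = ∑ r, g r * q' r := by
  obtain ⟨x₀⟩ := ‹Nonempty X›
  let e := (Equiv.funSplitAt i X).symm
  have hsplit : ∀ F : (ι → X) → ℝ,
      ∑ r, F r = ∑ r' : {j // j ≠ i} → X, ∑ b, F (update (e (x₀, r')) i b) := by
    intro F
    rw [← e.sum_comp, Fintype.sum_prod_type, sum_comm]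
    refine sum_congr rfl fun r' _ => sum_congr rfl fun b _ => congrArg F ?_
    ext j
    by_cases hj : j = i
    · subst hj; simp [e]
    · simp [e, hj]
  rw [hsplit, hsplit]
  refine sum_congr rfl fun r' _ => ?_
  simp_rw [hg, ← mul_sum, hqq']

theorem sum_mul_sum_comm {α β : Type*} [Fintype α] [Fintype β]
    (A : α → ℝ) (B : β → α → ℝ) (F : β → ℝ) :
    ∑ a, A a * ∑ b, B b a * F b = ∑ b, (∑ a, A a * B b a) * F b := by
  simp_rw [mul_sum, sum_mul, mul_assoc]
  exact sum_comm

theorem finrank_ker_proj (x : X) :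
    Module.finrank ℝ (LinearMap.ker (LinearMap.proj x : (X → ℝ) →ₗ[ℝ] ℝ)) = Fintype.card X - 1 := by
  have hrange : LinearMap.range (LinearMap.proj x : (X → ℝ) →ₗ[ℝ] ℝ) = ⊤ :=
    LinearMap.range_eq_top.mpr fun a => ⟨fun _ => a, rfl⟩
  have := LinearMap.finrank_range_add_finrank_ker (LinearMap.proj x : (X → ℝ) →ₗ[ℝ] ℝ)
  rw [hrange, finrank_top, Module.finrank_self, Module.finrank_fintype_fun_eq_card] at this
  omega

end Pi

theorem direction_affineSpan_eq_of_sub_mem_of_add_smul_mem {𝕜 E : Type*} [Field 𝕜]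
    [AddCommGroup E] [Module 𝕜 E] {s : Set E} {V : Submodule 𝕜 E} {u : E} (hu : u ∈ s)
    (hs : ∀ p ∈ s, p - u ∈ V) (hV : ∀ v ∈ V, ∃ ε : 𝕜, ε ≠ 0 ∧ u + ε • v ∈ s) :
    (affineSpan 𝕜 s).direction = V := by
  rw [direction_affineSpan, vectorSpan_eq_span_vsub_set_right 𝕜 hu]
  apply le_antisymm
  · rw [Submodule.span_le]
    rintro _ ⟨p, hp, rfl⟩
    exact hs p hp
  · intro v hv
    obtain ⟨ε, hε, hmem⟩ := hV v hv
    have : ε • v ∈ Submodule.span 𝕜 ((· -ᵥ u) '' s) :=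
      Submodule.subset_span ⟨_, hmem, by simp [vsub_eq_sub]⟩
    simpa [smul_smul, hε] using Submodule.smul_mem _ ε⁻¹ this

section NoSignalling

variable {ι S O : Type*} [Fintype ι] [DecidableEq ι] [Fintype O]

def IsNoSignalling (q : (ι → S) → (ι → O) → ℝ) : Prop :=
  ∀ i : ι, ∀ s s' : ι → S, (∀ j, j ≠ i → s j = s' j) → ∀ r : ι → O,
    ∑ b : O, q s (update r i b) = ∑ b : O, q s' (update r i b)

variable (ι S O)

def noSignallingSubmodule : Submodule ℝ ((ι → S) → (ι → O) → ℝ) where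
  carrier := {q | IsNoSignalling q}
  add_mem' hp hq i s s' h r := by
    simp only [Pi.add_apply, sum_add_distrib, hp i s s' h r, hq i s s' h r]
  zero_mem' _ _ _ _ _ := rfl
  smul_mem' c _ hq i s s' h r := by
    simp only [Pi.smul_apply, smul_eq_mul, ← mul_sum, hq i s s' h r]

def noSignallingZeroSum : Submodule ℝ ((ι → S) → (ι → O) → ℝ) where
  carrier := {q | IsNoSignalling q ∧ ∀ s, ∑ r, q s r = 0}
  add_mem' hp hq := ⟨(noSignallingSubmodule ι S O).add_mem hp.1 hq.1,
    fun s => by simp only [Pi.add_apply, sum_add_distrib, hp.2 s, hq.2 s, add_zero]⟩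
  zero_mem' := ⟨(noSignallingSubmodule ι S O).zero_mem, fun _ => sum_const_zero⟩
  smul_mem' c _ hq := ⟨(noSignallingSubmodule ι S O).smul_mem c hq.1,
    fun s => by simp only [Pi.smul_apply, smul_eq_mul, ← mul_sum, hq.2 s, mul_zero]⟩

def noSignallingPolytope : Set ((ι → S) → (ι → O) → ℝ) :=
  {p | (∀ s r, 0 ≤ p s r) ∧ (∀ s, ∑ r, p s r = 1) ∧ IsNoSignalling p}

theorem direction_affineSpan_noSignallingPolytope [Fintype S] [Nonempty O] :
    (affineSpan ℝ (noSignallingPolytope ι S O)).direction = noSignallingZeroSum ι S O := by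
  set c : ℝ := (Fintype.card (ι → O) : ℝ)⁻¹
  have hc : 0 < c := by positivity
  have hsum_c : ∑ _r : ι → O, c = 1 := by
    rw [sum_const, card_univ, nsmul_eq_mul, mul_inv_cancel₀ (by positivity)]
  refine direction_affineSpan_eq_of_sub_mem_of_add_smul_mem (u := fun _ _ => c)
    ⟨fun _ _ => hc.le, fun _ => hsum_c, fun _ _ _ _ _ => rfl⟩ ?_ ?_
  · rintro p ⟨-, hp1, hpns⟩
    refine ⟨(noSignallingSubmodule ι S O).sub_mem hpns fun _ _ _ _ _ => rfl, fun s => ?_⟩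
    simp only [Pi.sub_apply, sum_sub_distrib, hp1 s, hsum_c, sub_self]
  · rintro v ⟨hvns, hv0⟩
    set ε := c / (‖v‖ + 1)
    have hε : 0 < ε := by positivity
    have hεv : ε * ‖v‖ ≤ c := by
      rw [div_mul_eq_mul_div, div_le_iff₀ (by positivity)]
      nlinarith [norm_nonneg v]
    refine ⟨ε, hε.ne', fun s r => ?_, fun s => ?_, ?_⟩
    · have hvsr : |v s r| ≤ ‖v‖ := (norm_le_pi_norm (v s) r).trans (norm_le_pi_norm v s)
      have := neg_abs_le (v s r)
      simp only [Pi.add_apply, Pi.smul_apply, smul_eq_mul]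
      nlinarith
    · simp only [Pi.add_apply, Pi.smul_apply, smul_eq_mul, sum_add_distrib, ← mul_sum, hsum_c,
        hv0 s, mul_zero, add_zero]
    · exact (noSignallingSubmodule ι S O).add_mem (fun _ _ _ _ _ => rfl)
        ((noSignallingSubmodule ι S O).smul_mem ε hvns)

end NoSignalling

namespace CollinsGisin

variable {O : Type*} [DecidableEq O] (o₀ : O)

/- A one-party event is `none` (any outcome) or `some a` (outcome `a ≠ o₀`). `ind` is its
indicator and `dual` the inclusion–exclusion dual family: `dual none = δ_{o₀}`,
`dual (some a) = δ_a - δ_{o₀}`. -/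
def ind : Option {o // o ≠ o₀} → O → ℝ
  | none, _ => 1
  | some a, r => if r = a then 1 else 0

def dual : Option {o // o ≠ o₀} → O → ℝ
  | none, r => if r = o₀ then 1 else 0
  | some a, r => (if r = a then 1 else 0) - if r = o₀ then 1 else 0

variable [Fintype O]

theorem sum_dual (e : Option {o // o ≠ o₀}) : ∑ b, dual o₀ e b = if e = none then 1 else 0 := by
  cases e <;> simp [dual, sum_sub_distrib]

theorem sum_dual_mul_ind (r r' : O) :
    ∑ e, dual o₀ e r * ind o₀ e r' = if r = r' then 1 else 0 := by
  rw [Fintype.sum_option]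
  by_cases hr' : r' = o₀
  · have h (a : {o // o ≠ o₀}) : o₀ ≠ a := a.2.symm
    simp [dual, ind, hr', h, eq_comm]
  · rw [sum_eq_single ⟨r', hr'⟩ (fun a _ ha => ?_) (by simp)]
    · simp [dual, ind]
    · have : r' ≠ a := fun h => ha (Subtype.ext h.symm)
      simp [ind, this]

theorem sum_ind_mul_dual (e e' : Option {o // o ≠ o₀}) :
    ∑ b, ind o₀ e b * dual o₀ e' b = if e = e' then 1 else 0 := by
  cases e with
  | none => simp [ind, sum_dual, eq_comm]
  | some a =>
    cases e' with
    | none => simp [ind, dual, a.2.symm]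
    | some a' => simp [ind, dual, a.2, Subtype.ext_iff]

variable {ι S : Type*} [Fintype ι] [DecidableEq ι]

def marginal (q : (ι → S) → (ι → O) → ℝ) (e : ι → Option {o // o ≠ o₀}) (s : ι → S) : ℝ :=
  ∑ r, (∏ i, ind o₀ (e i) (r i)) * q s r

theorem marginal_eq_of_eq_none {q : (ι → S) → (ι → O) → ℝ} (hq : IsNoSignalling q)
    {e : ι → Option {o // o ≠ o₀}} {i : ι} (hi : e i = none) {s s' : ι → S}
    (h : ∀ j, j ≠ i → s j = s' j) : marginal o₀ q e s = marginal o₀ q e s' := by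
  have : Nonempty O := ⟨o₀⟩
  refine sum_mul_eq_of_sum_update_eq (hq i s s' h) fun r b => prod_congr rfl fun j _ => ?_
  rcases eq_or_ne j i with rfl | hj
  · simp [hi, ind]
  · rw [update_of_ne hj]

theorem marginal_congr {q : (ι → S) → (ι → O) → ℝ} (hq : IsNoSignalling q)
    (e : ι → Option {o // o ≠ o₀}) {s s' : ι → S} (h : ∀ i, e i ≠ none → s i = s' i) :
    marginal o₀ q e s = marginal o₀ q e s' := by
  suffices ∀ D : Finset ι, ∀ s s' : ι → S, (∀ i ∉ D, s i = s' i) → (∀ i ∈ D, e i = none) →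
      marginal o₀ q e s = marginal o₀ q e s' from
    this (univ.filter (e · = none)) s s' (fun i hi => h i (by simpa using hi)) (by simp)
  intro D
  induction D using Finset.induction_on with
  | empty =>
    intro s s' h _
    rw [funext fun i => h i (notMem_empty i)]
  | insert i D hiD ih =>
    intro s s' h hD
    calc marginal o₀ q e s = marginal o₀ q e (update s i (s' i)) :=
          marginal_eq_of_eq_none o₀ hq (hD i (mem_insert_self i D))
            fun j hj => (update_of_ne hj _ _).symm
      _ = marginal o₀ q e s' := by
        refine ih _ _ (fun j hj => ?_) fun j hj => hD j (mem_insert_of_mem hj)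
        rcases eq_or_ne j i with rfl | hji
        · rw [update_self]
        · rw [update_of_ne hji]
          exact h j (by simp [hji, hj])

variable (S) in
abbrev Index : Type _ := Option (S × {o // o ≠ o₀})

/- The parties with `t i = none` are marginalised; they are given the dummy setting `d`, which by
no-signalling does not matter (`coords_lift`). -/
def coords (d : S) (q : (ι → S) → (ι → O) → ℝ) (t : ι → Index o₀ S) : ℝ :=
  marginal o₀ q (fun i => (t i).map Prod.snd) (fun i => (t i).elim d Prod.fst)

def lift (s : ι → S) (e : ι → Option {o // o ≠ o₀}) : ι → Index o₀ S :=
  fun i => (e i).map (s i, ·)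

def recon : ((ι → Index o₀ S) → ℝ) →ₗ[ℝ] ((ι → S) → (ι → O) → ℝ) where
  toFun f s r := ∑ e, (∏ i, dual o₀ (e i) (r i)) * f (lift o₀ s e)
  map_add' f g := by ext s r; simp [mul_add, sum_add_distrib]
  map_smul' c f := by ext s r; simp [mul_sum, mul_left_comm]

theorem recon_apply (f : (ι → Index o₀ S) → ℝ) (s : ι → S) (r : ι → O) :
    recon o₀ f s r = ∑ e, (∏ i, dual o₀ (e i) (r i)) * f (lift o₀ s e) := rfl

theorem coords_lift {q : (ι → S) → (ι → O) → ℝ} (hq : IsNoSignalling q) (d : S) (s : ι → S)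
    (e : ι → Option {o // o ≠ o₀}) : coords o₀ d q (lift o₀ s e) = marginal o₀ q e s := by
  refine (congrArg (marginal o₀ q · _) (funext fun i => ?_)).trans (marginal_congr o₀ hq e ?_)
  · simp [lift, Option.map_map, comp_def]
  · intro i hi
    obtain ⟨a, ha⟩ := Option.ne_none_iff_exists'.mp hi
    simp [lift, ha]

theorem sum_prod_ind_mul_prod_dual (e e' : ι → Option {o // o ≠ o₀}) :
    ∑ r : ι → O, (∏ i, ind o₀ (e i) (r i)) * ∏ i, dual o₀ (e' i) (r i) =
      if e = e' then 1 else 0 := by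
  simp_rw [sum_pi_prod_mul_prod, sum_ind_mul_dual, Fintype.prod_boole, ← funext_iff]

theorem sum_prod_dual_mul_prod_ind (r r' : ι → O) :
    ∑ e : ι → Option {o // o ≠ o₀}, (∏ i, dual o₀ (e i) (r i)) * ∏ i, ind o₀ (e i) (r' i) =
      if r = r' then 1 else 0 := by
  rw [sum_pi_prod_mul_prod (fun i y => dual o₀ y (r i)) fun i y => ind o₀ y (r' i)]
  simp_rw [sum_dual_mul_ind, Fintype.prod_boole, ← funext_iff]

theorem coords_recon (d : S) (f : (ι → Index o₀ S) → ℝ) : coords o₀ d (recon o₀ f) = f := by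
  ext t
  simp_rw [coords, marginal, recon_apply, sum_mul_sum_comm, sum_prod_ind_mul_prod_dual, boole_mul,
    sum_ite_eq, mem_univ, if_true]
  congr 1
  funext i
  simp only [lift]
  rcases t i with _ | ⟨s, a⟩ <;> rfl

theorem recon_coords {q : (ι → S) → (ι → O) → ℝ} (hq : IsNoSignalling q) (d : S) :
    recon o₀ (coords o₀ d q) = q := by
  ext s r
  simp_rw [recon_apply, coords_lift o₀ hq, marginal, sum_mul_sum_comm, sum_prod_dual_mul_prod_ind,
    boole_mul, sum_ite_eq, mem_univ, if_true]

theorem sum_recon (f : (ι → Index o₀ S) → ℝ) (s : ι → S) :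
    ∑ r, recon o₀ f s r = f fun _ => none := by
  simp_rw [recon_apply]
  rw [sum_comm]
  simp_rw [← sum_mul, ← Fintype.prod_sum, sum_dual, Fintype.prod_boole, ← funext_iff, boole_mul]
  rw [sum_ite_eq' univ (fun _ => none), if_pos (mem_univ _)]
  rfl

theorem isNoSignalling_recon (f : (ι → Index o₀ S) → ℝ) : IsNoSignalling (recon o₀ f) := by
  intro i s s' h r
  simp_rw [recon_apply]
  rw [sum_comm, sum_comm (γ := O)]
  simp_rw [← sum_mul, sum_prod_update, sum_dual]
  refine sum_congr rfl fun e _ => ?_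
  split_ifs with he
  · congr 2
    ext j
    rcases eq_or_ne j i with rfl | hj
    · simp [lift, he]
    · simp [lift, h j hj]
  · simp

end CollinsGisin

section Dimension

open CollinsGisin

variable {ι S O : Type*} [Fintype ι] [DecidableEq ι] [Fintype O] [DecidableEq O]

theorem noSignallingZeroSum_eq_map_recon (o₀ : O) (d : S) :
    noSignallingZeroSum ι S O =
      (LinearMap.ker (LinearMap.proj fun _ => none : ((ι → Index o₀ S) → ℝ) →ₗ[ℝ] ℝ)).map
        (recon o₀) := by
  ext q
  constructor
  · rintro ⟨hq, hq0⟩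
    refine ⟨coords o₀ d q, ?_, recon_coords o₀ hq d⟩
    rw [SetLike.mem_coe, LinearMap.mem_ker, LinearMap.proj_apply,
      ← sum_recon o₀ (coords o₀ d q) fun _ => d, recon_coords o₀ hq d, hq0]
  · rintro ⟨f, hf, rfl⟩
    exact ⟨isNoSignalling_recon o₀ f, fun s => (sum_recon o₀ f s).trans hf⟩

variable (ι S O) in
theorem finrank_noSignallingZeroSum [Fintype S] [Nonempty S] [Nonempty O] :
    Module.finrank ℝ (noSignallingZeroSum ι S O) =
      (Fintype.card S * (Fintype.card O - 1) + 1) ^ Fintype.card ι - 1 := by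
  obtain ⟨d⟩ := ‹Nonempty S›
  obtain ⟨o₀⟩ := ‹Nonempty O›
  have hinj : Injective (recon o₀ : ((ι → Index o₀ S) → ℝ) →ₗ[ℝ] _) :=
    LeftInverse.injective (coords_recon o₀ d)
  rw [noSignallingZeroSum_eq_map_recon o₀ d,
    ← (Submodule.equivMapOfInjective _ hinj _).finrank_eq, finrank_ker_proj]
  simp [Fintype.card_subtype_compl]

end Dimension

theorem stmt8_general (n m k : ℕ) (hm : 0 < m) (hk : 0 < k)
    (NS : Set ((Fin n → Fin m) → (Fin n → Fin k) → ℝ))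
    (hNS : ∀ p, p ∈ NS ↔
      ((∀ s r, 0 ≤ p s r) ∧
       (∀ s, ∑ r : Fin n → Fin k, p s r = 1) ∧
       (∀ i : Fin n, ∀ s s' : Fin n → Fin m, (∀ j, j ≠ i → s j = s' j) →
         ∀ r : Fin n → Fin k,
           ∑ b : Fin k, p s (Function.update r i b) =
           ∑ b : Fin k, p s' (Function.update r i b)))) :
    Module.finrank ℝ (affineSpan ℝ NS).direction = (m * (k - 1) + 1) ^ n - 1 := by
  obtain rfl : NS = noSignallingPolytope (Fin n) (Fin m) (Fin k) := Set.ext hNS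
  have : Nonempty (Fin m) := ⟨⟨0, hm⟩⟩
  have : Nonempty (Fin k) := ⟨⟨0, hk⟩⟩
  rw [direction_affineSpan_noSignallingPolytope, finrank_noSignallingZeroSum]
  simp

/-- The dimension (of the affine hull) of the set of no-signalling,
normalized joint conditional probability distributions for `n` parties, each with `m`
settings and `k` outcomes, is `(m(k-1)+1)^n - 1`. -/
theorem stmt8 (n m k : ℕ) (hn : 0 < n) (hm : 0 < m) (hk : 0 < k)
    (NS : Set ((Fin n → Fin m) → (Fin n → Fin k) → ℝ))
    (hNS : ∀ p, p ∈ NS ↔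
      ((∀ s r, 0 ≤ p s r) ∧
       (∀ s, ∑ r : Fin n → Fin k, p s r = 1) ∧
       (∀ i : Fin n, ∀ s s' : Fin n → Fin m, (∀ j, j ≠ i → s j = s' j) →
         ∀ r : Fin n → Fin k,
           ∑ b : Fin k, p s (Function.update r i b) =
           ∑ b : Fin k, p s' (Function.update r i b)))) :
    Module.finrank ℝ (affineSpan ℝ NS).direction = (m * (k - 1) + 1) ^ n - 1 :=
  stmt8_general n m k hm hk NS hNS
end

section
/- Suppose functions λ_v(i, a_{I∖i}) for i ∈ I = {1,...,n} and a_{I∖i} ∈ {0,...,k-1}^{I∖i} satisfy the homogeneous conditions ∑_{a_j=0}^{k-1} ∑_{i∈I} λ_v(i, a_{I∖i}) = 0 for every j ∈ I and every choice of the remaining outcomes. Then ∑_{i∈I} λ_v(i, a_{I∖i}) = 0 identically. -/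
/-- If functions `λ_v(i, a_{I∖i})` (each independent of the `i`-th
outcome) satisfy the homogeneous conditions `∑_{a_j} ∑_i λ_v(i, a_{I∖i}) = 0` for every
coordinate `j`, then `∑_i λ_v(i, a_{I∖i}) = 0` identically. -/
theorem stmt12 (n k : ℕ) (hk : 0 < k)
    (lam : Fin n → (Fin n → Fin k) → ℝ)
    (hdep : ∀ i a b, lam i (Function.update a i b) = lam i a)
    (hhom : ∀ (j : Fin n) (a : Fin n → Fin k),
      ∑ b : Fin k, ∑ i : Fin n, lam i (Function.update a j b) = 0) :
    ∀ a : Fin n → Fin k, ∑ i : Fin n, lam i a = 0 := by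
  classical
  set F : (Fin n → Fin k) → ℝ := fun a => ∑ i, lam i a with hF
  -- key orthogonality: ∑_a lam i a * F a = 0
  have key : ∀ i : Fin n, ∑ a : Fin n → Fin k, lam i a * F a = 0 := by
    intro i
    set e := Equiv.funSplitAt i (Fin k) with he
    have hsum : ∑ a : Fin n → Fin k, lam i a * F a
        = ∑ p : Fin k × ({ j // j ≠ i } → Fin k),
            lam i (e.symm p) * F (e.symm p) := (e.symm.sum_comp _).symm
    rw [hsum, Fintype.sum_prod_type, Finset.sum_comm]
    apply Finset.sum_eq_zero
    intro r _
    have b0 : Fin k := ⟨0, hk⟩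
    set a0 : Fin n → Fin k := e.symm (⟨0, hk⟩, r) with ha0
    have hupd : ∀ b : Fin k, e.symm (b, r) = Function.update a0 i b := by
      intro b
      funext j
      by_cases h : j = i
      · subst h
        simp [ha0, he, Equiv.funSplitAt, Equiv.piSplitAt, Function.update]
      · simp [ha0, he, Equiv.funSplitAt, Equiv.piSplitAt, Function.update, h]
    calc ∑ b : Fin k, lam i (e.symm (b, r)) * F (e.symm (b, r))
        = ∑ b : Fin k, lam i a0 * F (Function.update a0 i b) := by
          refine Finset.sum_congr rfl fun b _ => ?_
          rw [hupd b, hdep]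
      _ = lam i a0 * ∑ b : Fin k, F (Function.update a0 i b) := by
          rw [Finset.mul_sum]
      _ = 0 := by
          have := hhom i a0
          simp only [hF] at *
          rw [this, mul_zero]
  have hsq : ∑ a : Fin n → Fin k, F a * F a = 0 := by
    have : ∀ a : Fin n → Fin k, F a * F a = ∑ i : Fin n, lam i a * F a := by
      intro a
      rw [hF]
      simp [Finset.sum_mul]
    calc ∑ a : Fin n → Fin k, F a * F a
        = ∑ a : Fin n → Fin k, ∑ i : Fin n, lam i a * F a := by
          exact Finset.sum_congr rfl fun a _ => this a
      _ = ∑ i : Fin n, ∑ a : Fin n → Fin k, lam i a * F a := Finset.sum_comm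
      _ = 0 := by simp [key]
  intro a
  have hz : F a * F a = 0 := by
    have h := (Finset.sum_eq_zero_iff_of_nonneg
      (fun x _ => mul_self_nonneg (F x))).mp hsq
    exact h a (Finset.mem_univ a)
  exact mul_self_eq_zero.mp hz
end

section
/- Deciding whether a symmetric correlation vector for n parties with 2 binary settings lies in the symmetrized local polytope can be done by checking membership in the convex hull of at most (n+1)(n+2)(n+3)/6 points in a space of dimension n(n+3)/2; in particular the size of this description is polynomial in n, in contrast with the 4^n vertices and dimension 3^n − 1 of the full local polytope. -/
/-!
Relabelling the parties permutes the deterministic strategies, so the local polytope is mapped to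
itself by every relabelling. Hence the symmetrization `sym`, the average of the relabellings, is a
linear map fixing every symmetric `p` and sending each deterministic vertex into the local
polytope: a symmetric `p` is local iff it lies in the convex hull of the symmetrized vertices.
The symmetrization of the vertex of `a : Fin n → Fin 2 → Fin 2` only depends on the multiset of
the `n` local strategies `a i`, one of four functions `Fin 2 → Fin 2`, and there are
`(n + 3).choose 3` such multisets.
-/

open Finset

section Averaging

variable {G V : Type*} [Fintype G] [Nonempty G] [AddCommGroup V] [Module ℝ V]

theorem inv_card_smul_sum_mem_convexHull {S : Set V} {z : G → V} (hz : ∀ g, z g ∈ S) :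
    (Fintype.card G : ℝ)⁻¹ • ∑ g, z g ∈ convexHull ℝ S := by
  have h := univ.centerMass_mem_convexHull (w := fun _ : G => (1 : ℝ)) (fun _ _ => zero_le_one)
    (by simp [Fintype.card_pos]) (fun g _ => hz g)
  simpa [Finset.centerMass] using h

theorem inv_card_smul_sum_const (v : V) : (Fintype.card G : ℝ)⁻¹ • ∑ _g : G, v = v := by
  rw [sum_const, card_univ, ← Nat.cast_smul_eq_nsmul ℝ, smul_smul,
    inv_mul_cancel₀ (Nat.cast_ne_zero.mpr Fintype.card_ne_zero), one_smul]

theorem mem_convexHull_iff_mem_convexHull_image_average (T : G → V →ₗ[ℝ] V) {A : V → V}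
    (hA : ∀ v, A v = (Fintype.card G : ℝ)⁻¹ • ∑ g, T g v) {S : Set V}
    (hS : ∀ g, ∀ s ∈ S, T g s ∈ S) {p : V} (hp : ∀ g, T g p = p) :
    p ∈ convexHull ℝ S ↔ p ∈ convexHull ℝ (A '' S) := by
  constructor
  · intro hpS
    have hA_lin : A = ⇑((Fintype.card G : ℝ)⁻¹ • ∑ g, T g) := funext fun v => by simp [hA]
    have hAp : A p = p := by simp only [hA, hp, inv_card_smul_sum_const]
    rw [← hAp, hA_lin, ← LinearMap.image_convexHull]
    exact Set.mem_image_of_mem _ hpS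
  · refine fun h => convexHull_min ?_ (convex_convexHull ℝ S) h
    rintro _ ⟨s, hs, rfl⟩
    rw [hA]
    exact inv_card_smul_sum_mem_convexHull fun g => hS g s hs

end Averaging

section Counting

theorem Monotone.eq_of_map_univ_val_eq {α : Type*} [LinearOrder α] {n : ℕ} {a b : Fin n → α}
    (ha : Monotone a) (hb : Monotone b) (h : univ.val.map a = univ.val.map b) : a = b := by
  rw [Fin.univ_val_map, Fin.univ_val_map, Multiset.coe_eq_coe] at h
  exact List.ofFn_injective (h.eq_of_sortedLE ha.sortedLE_ofFn hb.sortedLE_ofFn)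

theorem ncard_range_le_card_sym {α β : Type*} [Finite α] {n : ℕ} {f : (Fin n → α) → β}
    (hf : ∀ a (σ : Equiv.Perm (Fin n)), f (a ∘ σ) = f a) :
    (Set.range f).ncard ≤ Nat.card (Sym α n) := by
  -- Under any linear order, sorting picks a representative of each orbit, and sorted tuples are
  -- determined by their multiset of values.
  obtain ⟨k, ⟨e⟩⟩ := Finite.exists_equiv_fin α
  let _ : LinearOrder α := LinearOrder.lift' e e.injective
  let M : Set (Fin n → α) := {a | Monotone a}
  have h_sort : Set.range f ⊆ f '' M := by
    rintro _ ⟨a, rfl⟩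
    exact ⟨a ∘ Tuple.sort a, Tuple.monotone_sort a, hf a _⟩
  calc (Set.range f).ncard ≤ (f '' M).ncard := Set.ncard_le_ncard h_sort (Set.toFinite _)
    _ ≤ M.ncard := Set.ncard_image_le (Set.toFinite M)
    _ ≤ (Set.univ : Set (Sym α n)).ncard :=
      Set.ncard_le_ncard_of_injOn (fun a => ⟨univ.val.map a, by simp⟩) (fun _ _ => trivial)
        (fun a ha b hb hab => ha.eq_of_map_univ_val_eq hb (congrArg Subtype.val hab))
    _ = Nat.card (Sym α n) := Set.ncard_univ _

theorem Nat.add_three_choose_three (n : ℕ) :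
    (n + 3).choose 3 = (n + 1) * (n + 2) * (n + 3) / 6 := by
  rw [Nat.choose_eq_descFactorial_div_factorial]
  simp [Nat.descFactorial, Nat.factorial]
  ring_nf

theorem card_sym_of_card_eq_four {α : Type*} [Fintype α] (hα : Fintype.card α = 4) (n : ℕ) :
    Nat.card (Sym α n) = (n + 1) * (n + 2) * (n + 3) / 6 := by
  classical
  rw [Nat.card_eq_fintype_card, Sym.card_sym_eq_choose, hα, ← Nat.add_three_choose_three,
    show 4 + n - 1 = n + 3 by omega, Nat.choose_symm_add]

end Counting

section Parties

variable {n : ℕ} {ι κ : Type*}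

def deterministicBehavior [DecidableEq κ] (a : Fin n → ι → κ)
    (sr : (Fin n → ι) × (Fin n → κ)) : ℝ :=
  if ∀ i, sr.2 i = a i (sr.1 i) then 1 else 0

def relabelParties (σ : Equiv.Perm (Fin n)) :
    ((Fin n → ι) × (Fin n → κ) → ℝ) →ₗ[ℝ] ((Fin n → ι) × (Fin n → κ) → ℝ) :=
  LinearMap.funLeft ℝ ℝ fun sr => (sr.1 ∘ σ, sr.2 ∘ σ)

@[simp]
theorem relabelParties_apply (σ : Equiv.Perm (Fin n)) (v : (Fin n → ι) × (Fin n → κ) → ℝ)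
    (sr : (Fin n → ι) × (Fin n → κ)) :
    relabelParties σ v sr = v (sr.1 ∘ σ, sr.2 ∘ σ) :=
  rfl

theorem relabelParties_mul (σ τ : Equiv.Perm (Fin n)) (v : (Fin n → ι) × (Fin n → κ) → ℝ) :
    relabelParties (σ * τ) v = relabelParties σ (relabelParties τ v) :=
  rfl

theorem relabelParties_deterministicBehavior [DecidableEq κ] (σ : Equiv.Perm (Fin n))
    (a : Fin n → ι → κ) :
    relabelParties σ (deterministicBehavior a) = deterministicBehavior (a ∘ ⇑σ⁻¹) := by
  funext sr
  simp only [relabelParties_apply, deterministicBehavior]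
  refine if_congr ⟨fun h j => ?_, fun h i => ?_⟩ rfl rfl
  · simpa using h (σ⁻¹ j)
  · simpa using h (σ i)

noncomputable def symmetrize (v : (Fin n → ι) × (Fin n → κ) → ℝ) : (Fin n → ι) × (Fin n → κ) → ℝ :=
  (n.factorial : ℝ)⁻¹ • ∑ σ : Equiv.Perm (Fin n), relabelParties σ v

theorem symmetrize_eq_inv_card_smul_sum (v : (Fin n → ι) × (Fin n → κ) → ℝ) :
    symmetrize v =
      (Fintype.card (Equiv.Perm (Fin n)) : ℝ)⁻¹ • ∑ σ : Equiv.Perm (Fin n), relabelParties σ v := by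
  rw [Fintype.card_perm, Fintype.card_fin, symmetrize]

theorem symmetrize_relabelParties (τ : Equiv.Perm (Fin n)) (v : (Fin n → ι) × (Fin n → κ) → ℝ) :
    symmetrize (relabelParties τ v) = symmetrize v := by
  simp only [symmetrize, ← relabelParties_mul]
  congr 1
  exact Fintype.sum_equiv (Equiv.mulRight τ) _ _ fun _ => rfl

theorem symmetrize_deterministicBehavior_comp [DecidableEq κ] (a : Fin n → ι → κ)
    (τ : Equiv.Perm (Fin n)) :
    symmetrize (deterministicBehavior (a ∘ τ)) = symmetrize (deterministicBehavior a) := by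
  rw [← inv_inv τ, ← relabelParties_deterministicBehavior, symmetrize_relabelParties]

end Parties

/-- For the `(n,2,2)` Bell scenario, a symmetric correlation vector `p`
(invariant under all party permutations) is local — i.e. lies in the convex hull of the
`4^n` deterministic vertices — if and only if it is a convex combination of the
projections of the deterministic vertices onto the symmetric subspace, of which there
are at most `(n+1)(n+2)(n+3)/6` distinct ones; in particular the symmetrized
description has polynomial size in `n`. -/
theorem stmt17 (n : ℕ)
    (vert : (Fin n → Fin 2 → Fin 2) → ((Fin n → Fin 2) × (Fin n → Fin 2)) → ℝ)
    (hvert : ∀ a s r, vert a (s, r) = if (∀ i, r i = a i (s i)) then 1 else 0)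
    (sym : (((Fin n → Fin 2) × (Fin n → Fin 2)) → ℝ) →
           (((Fin n → Fin 2) × (Fin n → Fin 2)) → ℝ))
    (hsym : ∀ v, sym v = (n.factorial : ℝ)⁻¹ •
      ∑ σ : Equiv.Perm (Fin n), fun sr => v (sr.1 ∘ σ, sr.2 ∘ σ)) :
    Set.ncard (Set.range (fun a => sym (vert a))) ≤ (n + 1) * (n + 2) * (n + 3) / 6 ∧
    ∀ p : ((Fin n → Fin 2) × (Fin n → Fin 2)) → ℝ,
      (∀ σ : Equiv.Perm (Fin n), (fun sr => p (sr.1 ∘ σ, sr.2 ∘ σ)) = p) →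
      (p ∈ convexHull ℝ (Set.range vert) ↔
       p ∈ convexHull ℝ (Set.range (fun a => sym (vert a)))) := by
  obtain rfl : vert = deterministicBehavior := funext fun a => funext fun sr => hvert a sr.1 sr.2
  obtain rfl : sym = symmetrize := funext hsym
  refine ⟨?_, fun p hp => ?_⟩
  · calc _ ≤ Nat.card (Sym (Fin 2 → Fin 2) n) :=
          ncard_range_le_card_sym (symmetrize_deterministicBehavior_comp ·)
      _ = _ := card_sym_of_card_eq_four (by simp) n
  · rw [Set.range_comp' symmetrize]
    refine mem_convexHull_iff_mem_convexHull_image_average relabelParties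
      symmetrize_eq_inv_card_smul_sum ?_ hp
    rintro σ _ ⟨a, rfl⟩
    exact ⟨_, (relabelParties_deterministicBehavior σ a).symm⟩
end
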